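/- Let A ∈ ℂ^{m×n} be nonzero with Moore–Penrose pseudoinverse A†, and let X ∈ ℂ^{m×n} satisfy: the null space of X equals the null space of A and the null space of X* equals the null space of A*. Suppose J(X;A) < 1/2. Then max(κ(X A†), κ(A† X)) ≤ (1 + √(2 J(X;A))) / (1 − √(2 J(X;A))), where for a nonzero matrix M, κ(M) := ‖M‖₂ ‖M†‖₂ is the generalized condition number defined via the Moore–Penrose pseudoinverse M† and the spectral norm. -/

import Mathlib

/-!
Let `N = X A†` and `G = A A†`, an orthogonal projector, so `‖G‖₂ ≤ 1`. Since `A A† A†* = A†*`,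
`G N* = N*`, hence `G N† = N†` because `N† = N* N†* N†`. Writing `ε = √(2J) ≥ ‖(X - A) A†‖_F`, the
spectral norm bound `‖N - G‖₂ ≤ ε` gives `‖N‖₂ ≤ 1 + ε`, while `N† = N N† - (N - G) N†` with `N N†`
an orthogonal projector gives `‖N†‖₂ ≤ 1 + ε ‖N†‖₂`. The same argument applies to `A† X` and
`G = A† A`; there `G X* = X*` is the inclusion `ker A ⊆ ker X`.
-/

open scoped Matrix

/-- `B` is the Moore–Penrose pseudoinverse of `A`. -/
def IsMPInv {m n : ℕ} (A : Matrix (Fin m) (Fin n) ℂ) (B : Matrix (Fin n) (Fin m) ℂ) : Prop :=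
  A * B * A = A ∧ B * A * B = B ∧ (A * B)ᴴ = A * B ∧ (B * A)ᴴ = B * A

/-- The spectral norm (largest singular value): the operator norm of the matrix as a map
between Euclidean spaces. -/
noncomputable def specNorm {m n : ℕ} (M : Matrix (Fin m) (Fin n) ℂ) : ℝ :=
  ‖LinearMap.toContinuousLinearMap (Matrix.toEuclideanLin M)‖

/-- Squared Frobenius norm. -/
noncomputable def frobSq {m n : ℕ} (M : Matrix (Fin m) (Fin n) ℂ) : ℝ :=
  ∑ i, ∑ j, ‖M i j‖ ^ 2

/-- The misfit functional `J(X;A) = ½‖(X-A)A†‖_F² + ½‖A†(X-A)‖_F²`,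
with the pseudoinverse `Ad` of `A` given explicitly. -/
noncomputable def Jmis {m n : ℕ} (X A : Matrix (Fin m) (Fin n) ℂ)
    (Ad : Matrix (Fin n) (Fin m) ℂ) : ℝ :=
  (1 / 2) * frobSq ((X - A) * Ad) + (1 / 2) * frobSq (Ad * (X - A))

theorem norm_mul_norm_le_of_isStarProjection {E : Type*} [NonUnitalNormedRing E] [StarRing E]
    [CStarRing E] {a p b : E} {ε : ℝ} (hp : IsStarProjection p) (hpb : p * b = b)
    (hab : IsStarProjection (a * b)) (hε : ‖a - p‖ ≤ ε) (hε1 : ε < 1) :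
    ‖a‖ * ‖b‖ ≤ (1 + ε) / (1 - ε) := by
  have ha : ‖a‖ ≤ 1 + ε :=
    calc ‖a‖ = ‖p + (a - p)‖ := by rw [add_sub_cancel]
      _ ≤ ‖p‖ + ‖a - p‖ := norm_add_le _ _
      _ ≤ 1 + ε := add_le_add hp.norm_le hε
  have hb : ‖b‖ ≤ 1 / (1 - ε) := by
    have : ‖b‖ ≤ 1 + ε * ‖b‖ :=
      calc ‖b‖ = ‖a * b - (a - p) * b‖ := by rw [sub_mul, sub_sub_cancel, hpb]
        _ ≤ ‖a * b‖ + ‖(a - p) * b‖ := norm_sub_le _ _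
        _ ≤ 1 + ε * ‖b‖ := add_le_add hab.norm_le
            ((norm_mul_le _ _).trans (mul_le_mul_of_nonneg_right hε (norm_nonneg b)))
    rw [le_div_iff₀ (sub_pos.2 hε1)]
    linarith
  calc ‖a‖ * ‖b‖ ≤ (1 + ε) * (1 / (1 - ε)) :=
        mul_le_mul ha hb (norm_nonneg b) (by linarith [norm_nonneg (a - p)])
    _ = (1 + ε) / (1 - ε) := mul_one_div _ _

section Frobenius
open scoped Matrix.Norms.Frobenius

theorem Matrix.norm_toEuclideanLin_apply_le_frobenius {m n : Type*} [Fintype m] [Fintype n]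
    [DecidableEq n] {𝕜 : Type*} [RCLike 𝕜] (M : Matrix m n 𝕜) (x : EuclideanSpace 𝕜 n) :
    ‖Matrix.toEuclideanLin M x‖ ≤ ‖M‖ * ‖x‖ := by
  calc ‖Matrix.toEuclideanLin M x‖ = ‖Matrix.replicateCol Unit (M *ᵥ x.ofLp)‖ :=
        (Matrix.frobenius_norm_replicateCol _).symm
    _ = ‖M * Matrix.replicateCol Unit x.ofLp‖ := by rw [Matrix.replicateCol_mulVec]
    _ ≤ ‖M‖ * ‖Matrix.replicateCol Unit x.ofLp‖ := Matrix.frobenius_norm_mul _ _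
    _ = ‖M‖ * ‖x‖ := by simp

theorem frobSq_eq_frobenius_norm_sq {m n : ℕ} (M : Matrix (Fin m) (Fin n) ℂ) : frobSq M = ‖M‖ ^ 2 := by
  rw [Matrix.frobenius_norm_def, ← Real.sqrt_eq_rpow, Real.sq_sqrt (by positivity)]
  simp [frobSq]

theorem specNorm_le_sqrt_frobSq {m n : ℕ} (M : Matrix (Fin m) (Fin n) ℂ) :
    specNorm M ≤ √(frobSq M) := by
  rw [frobSq_eq_frobenius_norm_sq, Real.sqrt_sq (norm_nonneg M)]
  exact ContinuousLinearMap.opNorm_le_bound _ (norm_nonneg M)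
    (M.norm_toEuclideanLin_apply_le_frobenius)

end Frobenius

theorem frobSq_nonneg {m n : ℕ} (M : Matrix (Fin m) (Fin n) ℂ) : 0 ≤ frobSq M := by
  unfold frobSq; positivity

theorem specNorm_sub_mul_le {m n : ℕ} (X A : Matrix (Fin m) (Fin n) ℂ)
    (Ad : Matrix (Fin n) (Fin m) ℂ) : specNorm ((X - A) * Ad) ≤ √(2 * Jmis X A Ad) :=
  (specNorm_le_sqrt_frobSq _).trans <| Real.sqrt_le_sqrt <| by
    unfold Jmis; linarith [frobSq_nonneg (Ad * (X - A))]

theorem specNorm_mul_sub_le {m n : ℕ} (X A : Matrix (Fin m) (Fin n) ℂ)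
    (Ad : Matrix (Fin n) (Fin m) ℂ) : specNorm (Ad * (X - A)) ≤ √(2 * Jmis X A Ad) :=
  (specNorm_le_sqrt_frobSq _).trans <| Real.sqrt_le_sqrt <| by
    unfold Jmis; linarith [frobSq_nonneg ((X - A) * Ad)]

namespace IsMPInv

variable {m n : ℕ} {A : Matrix (Fin m) (Fin n) ℂ} {B : Matrix (Fin n) (Fin m) ℂ}

theorem isStarProjection_mul (h : IsMPInv A B) : IsStarProjection (A * B) :=
  ⟨by rw [IsIdempotentElem, ← Matrix.mul_assoc, h.1], h.2.2.1⟩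

theorem isStarProjection_mul_left (h : IsMPInv A B) : IsStarProjection (B * A) :=
  ⟨by rw [IsIdempotentElem, ← Matrix.mul_assoc, h.2.1], h.2.2.2⟩

theorem eq_conjTranspose_mul (h : IsMPInv A B) : B = Aᴴ * (Bᴴ * B) :=
  calc B = B * A * B := h.2.1.symm
    _ = (B * A)ᴴ * B := by rw [h.2.2.2]
    _ = Aᴴ * (Bᴴ * B) := by rw [Matrix.conjTranspose_mul, Matrix.mul_assoc]

theorem mul_eq_of_mul_conjTranspose (h : IsMPInv A B) {G : Matrix (Fin n) (Fin n) ℂ}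
    (hG : G * Aᴴ = Aᴴ) : G * B = B := by
  rw [h.eq_conjTranspose_mul, ← Matrix.mul_assoc, hG]

theorem mul_mul_conjTranspose (h : IsMPInv A B) : A * B * Bᴴ = Bᴴ :=
  calc A * B * Bᴴ = (A * B)ᴴ * Bᴴ := by rw [h.2.2.1]
    _ = (B * (A * B))ᴴ := (Matrix.conjTranspose_mul _ _).symm
    _ = Bᴴ := by rw [← Matrix.mul_assoc, h.2.1]

theorem mul_mul_conjTranspose_of_ker_le (h : IsMPInv A B) {X : Matrix (Fin m) (Fin n) ℂ}
    (hX : ∀ v, A *ᵥ v = 0 → X *ᵥ v = 0) : B * A * Xᴴ = Xᴴ := by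
  have hXBA : X * (B * A) = X := by
    refine Matrix.toLin'.injective (LinearMap.ext fun v => ?_)
    have hv : A *ᵥ ((B * A) *ᵥ v - v) = 0 := by
      rw [Matrix.mulVec_sub, Matrix.mulVec_mulVec, ← Matrix.mul_assoc, h.1, sub_self]
    simpa [Matrix.mulVec_sub, Matrix.mulVec_mulVec, sub_eq_zero] using hX _ hv
  calc B * A * Xᴴ = (X * (B * A))ᴴ := by rw [Matrix.conjTranspose_mul, h.2.2.2]
    _ = Xᴴ := by rw [hXBA]

open scoped Matrix.Norms.L2Operator in
theorem specNorm_mul_specNorm_le {k : ℕ} {N : Matrix (Fin k) (Fin k) ℂ}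
    {R : Matrix (Fin k) (Fin k) ℂ} (h : IsMPInv N R) {G : Matrix (Fin k) (Fin k) ℂ}
    (hG : IsStarProjection G) (hGN : G * Nᴴ = Nᴴ) {ε : ℝ} (hε : specNorm (N - G) ≤ ε)
    (hε1 : ε < 1) : specNorm N * specNorm R ≤ (1 + ε) / (1 - ε) :=
  norm_mul_norm_le_of_isStarProjection (E := Matrix (Fin k) (Fin k) ℂ) hG
    (h.mul_eq_of_mul_conjTranspose hGN) h.isStarProjection_mul hε hε1

end IsMPInv

theorem stmt13_general {m n : ℕ} (A X : Matrix (Fin m) (Fin n) ℂ) (Ad : Matrix (Fin n) (Fin m) ℂ)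
    (hMP : IsMPInv A Ad)
    (hR : ∀ v : Fin n → ℂ, X.mulVec v = 0 ↔ A.mulVec v = 0)
    (hJ : Jmis X A Ad < 1 / 2)
    (P : Matrix (Fin m) (Fin m) ℂ) (hP : IsMPInv (X * Ad) P)
    (Q : Matrix (Fin n) (Fin n) ℂ) (hQ : IsMPInv (Ad * X) Q) :
    max (specNorm (X * Ad) * specNorm P) (specNorm (Ad * X) * specNorm Q) ≤
      (1 + Real.sqrt (2 * Jmis X A Ad)) / (1 - Real.sqrt (2 * Jmis X A Ad)) := by
  have hε : √(2 * Jmis X A Ad) < 1 := by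
    rw [Real.sqrt_lt' one_pos]; linarith
  refine max_le (hP.specNorm_mul_specNorm_le hMP.isStarProjection_mul ?_ ?_ hε)
    (hQ.specNorm_mul_specNorm_le hMP.isStarProjection_mul_left ?_ ?_ hε)
  · rw [Matrix.conjTranspose_mul, ← Matrix.mul_assoc, hMP.mul_mul_conjTranspose]
  · simpa only [Matrix.sub_mul] using specNorm_sub_mul_le X A Ad
  · rw [Matrix.conjTranspose_mul, ← Matrix.mul_assoc,
      hMP.mul_mul_conjTranspose_of_ker_le fun v => (hR v).mpr]
  · simpa only [Matrix.mul_sub] using specNorm_mul_sub_le X A Ad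

/-- if `A ≠ 0`, the null spaces of `X` and `X*` equal those of `A` and `A*`,
and `J(X;A) < 1/2`, then the generalized condition numbers `κ(X A†) = ‖X A†‖₂ ‖(X A†)†‖₂`
and `κ(A† X)` are both at most `(1 + √(2J))/(1 - √(2J))`. -/
theorem stmt13 {m n : ℕ} (A X : Matrix (Fin m) (Fin n) ℂ) (Ad : Matrix (Fin n) (Fin m) ℂ)
    (hA : A ≠ 0) (hMP : IsMPInv A Ad)
    (hR : ∀ v : Fin n → ℂ, X.mulVec v = 0 ↔ A.mulVec v = 0)
    (hL : ∀ v : Fin m → ℂ, Xᴴ.mulVec v = 0 ↔ Aᴴ.mulVec v = 0)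
    (hJ : Jmis X A Ad < 1 / 2)
    (P : Matrix (Fin m) (Fin m) ℂ) (hP : IsMPInv (X * Ad) P)
    (Q : Matrix (Fin n) (Fin n) ℂ) (hQ : IsMPInv (Ad * X) Q) :
    max (specNorm (X * Ad) * specNorm P) (specNorm (Ad * X) * specNorm Q) ≤
      (1 + Real.sqrt (2 * Jmis X A Ad)) / (1 - Real.sqrt (2 * Jmis X A Ad)) :=
  stmt13_general A X Ad hMP hR hJ P hP Q hQ
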